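/- arXiv:1805.11641 — 2 statements merged into one kernel-verified Lean document; each statement's English description precedes it below -/
import Mathlib

section
/- Let n ≤ k, and let S ⊆ T(n,k) consist of all strictly increasing strings together with all their rotations. Let α = (k−n+1)(k−n+2)···(k−1)k. Then every β ∈ S is increasable in S to a rotation of α. -/
namespace UCG

abbrev Str (n k : ℕ) := Fin n → Fin k

def OneUp {n k : ℕ} (β γ : Str n k) : Prop :=
  ∃ i : Fin n, β i < γ i ∧ ∀ j : Fin n, j ≠ i → β j = γ j

def IncrTo {n k : ℕ} (S : Set (Str n k)) (β α : Str n k) : Prop :=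
  β ∈ S ∧ Relation.ReflTransGen (fun x y => OneUp x y ∧ y ∈ S) β α

def IsRotation {n k : ℕ} (β γ : Str n k) : Prop :=
  ∃ j : ℕ, ∀ i : Fin n, γ i = β ⟨(i.val + j) % n, Nat.mod_lt _ i.pos⟩

def ClosedUnderRot {n k : ℕ} (S : Set (Str n k)) : Prop :=
  ∀ β ∈ S, ∀ γ, IsRotation β γ → γ ∈ S

def shift {n k : ℕ} (c : Fin k) (β : Str n k) : Str n k :=
  fun i => if i.val = 0 then c else β ⟨i.val - 1, lt_of_le_of_lt (Nat.sub_le _ _) i.isLt⟩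

def lastSym {n k : ℕ} (hn : 0 < n) (β : Str n k) : Fin k :=
  β ⟨n - 1, Nat.sub_lt hn one_pos⟩

/-- `WinIn hn S tgt β m`: in the Warden's Game with legal positions `S`, starting
from position `β`, the prisoner can force the position `tgt` to be reached within
at most `m` moves, whatever the warden does.  A move from `β = γb` is either a
warden move to `cγ ∈ S` with `c < b`, or (if the warden passes) a prisoner move
to `cγ ∈ S` with `c ≥ b`. -/
inductive WinIn {n k : ℕ} (hn : 0 < n) (S : Set (Str n k)) (tgt : Str n k) :
    Str n k → ℕ → Prop
  | passWin (β : Str n k) (m : ℕ) (c : Fin k)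
      (hc : lastSym hn β ≤ c) (hcS : shift c β ∈ S) (heq : shift c β = tgt)
      (hW : ∀ c' : Fin k, c' < lastSym hn β → shift c' β ∈ S → shift c' β ≠ tgt →
        WinIn hn S tgt (shift c' β) m) :
      WinIn hn S tgt β (m + 1)
  | passStep (β : Str n k) (m : ℕ) (c : Fin k)
      (hc : lastSym hn β ≤ c) (hcS : shift c β ∈ S)
      (hwin : WinIn hn S tgt (shift c β) m)
      (hW : ∀ c' : Fin k, c' < lastSym hn β → shift c' β ∈ S → shift c' β ≠ tgt →
        WinIn hn S tgt (shift c' β) m) :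
      WinIn hn S tgt β (m + 1)

noncomputable def remoteness {n k : ℕ} (hn : 0 < n) (S : Set (Str n k))
    (tgt β : Str n k) : ℕ∞ :=
  sInf {e : ℕ∞ | ∃ t : ℕ, e = t ∧ WinIn hn S tgt β t}

def fshift {n k : ℕ} (b : Fin k) (β : Str n k) : Str n k :=
  fun i => if h : i.val = n - 1 then b else β ⟨i.val + 1, by have := i.isLt; omega⟩

def GreedyOk {n k : ℕ} (S : Set (Str n k)) (B : ℕ → Option (Str n k)) (m : ℕ)
    (β : Str n k) (b : Fin k) : Prop :=
  fshift b β ∈ S ∧ ∀ i : ℕ, 1 ≤ i → i ≤ m → B i ≠ some (fshift b β)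

def IsGreedy {n k : ℕ} (S : Set (Str n k)) (α : Str n k)
    (B : ℕ → Option (Str n k)) : Prop :=
  B 0 = some α ∧
  (∀ m : ℕ, B m = none → B (m + 1) = none) ∧
  ∀ m : ℕ, ∀ β : Str n k, B m = some β →
    ((1 ≤ m ∧ β = α) → B (m + 1) = none) ∧
    ((m = 0 ∨ β ≠ α) →
      ((¬ ∃ b : Fin k, GreedyOk S B m β b) → B (m + 1) = none) ∧
      (∀ b : Fin k, GreedyOk S B m β b → (∀ b' : Fin k, b' < b → ¬ GreedyOk S B m β b') →
        B (m + 1) = some (fshift b β)))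

def CycSubstr {m n k : ℕ} (hn : 0 < n) (γ : Str m k) (β : Str n k) : Prop :=
  ∃ j : ℕ, ∀ i : Fin m, β ⟨(j + i.val) % n, Nat.mod_lt _ hn⟩ = γ i

/-! A rotation of a strictly increasing `δ` is raised to the same rotation of
`α = (k-n+1)⋯k`. Since `δ i ≤ k - n + i`, overwriting the entries of `δ` by those of `α`
one at a time, from the right end leftwards, keeps the string strictly increasing; rotating
each intermediate string by the same amount keeps the whole path inside `S`. -/

open Function Relation

lemma _root_.StrictMono.fin_val_le_sub_add {n k : ℕ} {δ : Fin n → Fin k} (hδ : StrictMono δ)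
    (i : Fin n) : (δ i : ℕ) ≤ k - n + i := by
  have hcard := Finset.card_le_card_of_injOn δ
    (fun j hj => by simpa using hδ (by simpa using hj)) hδ.injective.injOn
      (s := Finset.Ioi i) (t := Finset.Ioi (δ i))
  simp only [Fin.card_Ioi] at hcard
  have := i.isLt
  have := (δ i).isLt
  omega

section Splice

variable {n : ℕ} {α : Type*}

def splice (c : ℕ) (x y : Fin n → α) : Fin n → α :=
  fun i => if c ≤ i.val then y i else x i

lemma splice_zero (x y : Fin n → α) : splice 0 x y = y :=
  funext fun _ => if_pos (Nat.zero_le _)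

lemma splice_self_length (x y : Fin n → α) : splice n x y = x :=
  funext fun i => if_neg (not_le.2 i.isLt)

lemma strictMono_splice [Preorder α] {x y : Fin n → α} (hx : StrictMono x) (hy : StrictMono y)
    (hxy : x ≤ y) (c : ℕ) : StrictMono (splice c x y) := by
  intro a b hab
  have hab' : a.val < b.val := hab
  simp only [splice]
  split_ifs
  · exact hy hab
  · omega
  · exact (hx hab).trans_le (hxy b)
  · exact hx hab

end Splice

lemma OneUp.comp {n k : ℕ} {x y : Str n k} (h : OneUp x y) {σ : Fin n → Fin n}
    (hσ : Bijective σ) : OneUp (x ∘ σ) (y ∘ σ) := by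
  obtain ⟨i, hlt, heq⟩ := h
  obtain ⟨i', rfl⟩ := hσ.surjective i
  exact ⟨i', hlt, fun j hj => heq (σ j) (hσ.injective.ne hj)⟩

lemma oneUp_splice_succ_or_eq {n k : ℕ} {x y : Str n k} (hxy : x ≤ y) (c : ℕ) :
    OneUp (splice (c + 1) x y) (splice c x y) ∨ splice (c + 1) x y = splice c x y := by
  by_cases hc : c < n
  · set i : Fin n := ⟨c, hc⟩
    have hsucc : ∀ j : Fin n, j ≠ i → splice (c + 1) x y j = splice c x y j := by
      intro j hj
      have : j.val ≠ c := fun h => hj (Fin.ext h)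
      simp only [splice]
      split_ifs <;> first | rfl | omega
    have hi₁ : splice (c + 1) x y i = x i := if_neg (by simp [i])
    have hi₀ : splice c x y i = y i := if_pos le_rfl
    rcases (hxy i).lt_or_eq with hlt | heq
    · exact .inl ⟨i, by rwa [hi₁, hi₀], hsucc⟩
    · refine .inr (funext fun j => ?_)
      by_cases hj : j = i
      · rw [hj, hi₁, hi₀, heq]
      · exact hsucc j hj
  · refine .inr (funext fun j => ?_)
    have := j.isLt
    simp only [splice]
    rw [if_neg (by omega), if_neg (by omega)]

lemma reflTransGen_oneUp_of_le {n k : ℕ} {x y : Str n k} (hxy : x ≤ y) {P : Str n k → Prop}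
    (hP : ∀ c, P (splice c x y)) : ReflTransGen (fun a b => OneUp a b ∧ P b) x y := by
  suffices h : ∀ c, ReflTransGen (fun a b => OneUp a b ∧ P b) (splice c x y) y by
    simpa only [splice_self_length] using h n
  intro c
  induction c with
  | zero => rw [splice_zero]
  | succ c ih =>
    rcases oneUp_splice_succ_or_eq hxy c with hup | heq
    · exact ih.head ⟨hup, hP c⟩
    · rwa [heq]

def rot {n : ℕ} (j : ℕ) (i : Fin n) : Fin n :=
  ⟨(i + j) % n, Nat.mod_lt _ i.pos⟩

lemma rot_bijective {n : ℕ} (j : ℕ) : Bijective (rot (n := n) j) := by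
  refine Finite.injective_iff_bijective.1 fun a b h => Fin.ext ?_
  have hmod : (a : ℕ) ≡ b [MOD n] := Nat.ModEq.add_right_cancel' j (congrArg Fin.val h)
  rwa [Nat.ModEq, Nat.mod_eq_of_lt a.isLt, Nat.mod_eq_of_lt b.isLt] at hmod

lemma isRotation_iff {n k : ℕ} {x y : Str n k} : IsRotation x y ↔ ∃ j, y = x ∘ rot j :=
  exists_congr fun _ => funext_iff.symm

/-- for `n ≤ k`, every member of the set of strictly increasing strings
and their rotations is increasable in that set to a rotation of
`α = (k-n+1)(k-n+2)⋯(k-1)k`. -/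
theorem rotations_of_increasing {n k : ℕ} (hnk : n ≤ k) :
    ∀ β ∈ {γ : Str n k | ∃ δ : Str n k, StrictMono δ ∧ IsRotation δ γ},
      ∃ γ, IsRotation
          (fun i : Fin n => (⟨k - n + i.val, by have := i.isLt; omega⟩ : Fin k)) γ ∧
        IncrTo {γ : Str n k | ∃ δ : Str n k, StrictMono δ ∧ IsRotation δ γ} β γ := by
  rintro β ⟨δ, hδ, hβ⟩
  obtain ⟨j, rfl⟩ := isRotation_iff.1 hβ
  set α : Str n k := fun i => ⟨k - n + i.val, by have := i.isLt; omega⟩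
  have hα : StrictMono α := fun a b hab => Fin.mk_lt_mk.2 (by have : a.val < b.val := hab; omega)
  have hδα : δ ≤ α := fun i => Fin.le_def.2 (hδ.fin_val_le_sub_add i)
  have hchain := reflTransGen_oneUp_of_le hδα (P := StrictMono) (strictMono_splice hδ hα hδα)
  refine ⟨α ∘ rot j, isRotation_iff.2 ⟨j, rfl⟩, ⟨δ, hδ, hβ⟩, ?_⟩
  exact hchain.lift (· ∘ rot j) fun a b ⟨hab, hb⟩ =>
    ⟨hab.comp (rot_bijective j), b, hb, isRotation_iff.2 ⟨j, rfl⟩⟩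

end UCG
end

section
/- In the Warden's Game on S ⊆ T(n,k) (closed under rotations) with goal α ∈ S, the prisoner can force a win from position β if and only if β is increasable in S to a rotation of α. -/
namespace UCG

-- ===================== auxiliary defs =====================

def lastIdx {n : ℕ} (hn : 0 < n) : Fin n := ⟨n - 1, Nat.sub_lt hn one_pos⟩

def rot1 {n k : ℕ} (β : Str n k) : Str n k :=
  fun i => β ⟨(i.val + 1) % n, Nat.mod_lt _ i.pos⟩

noncomputable def upd {n k : ℕ} (hn : 0 < n) (β : Str n k) (c : Fin k) : Str n k :=
  Function.update β (lastIdx hn) c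

lemma lastSym_eq {n k : ℕ} (hn : 0 < n) (β : Str n k) : lastSym hn β = β (lastIdx hn) := rfl

lemma rot1_pow_apply {n k : ℕ} (t : ℕ) (x : Str n k) (i : Fin n) :
    (rot1^[t] x) i = x ⟨(i.val + t) % n, Nat.mod_lt _ i.pos⟩ := by
  induction t generalizing i with
  | zero =>
    simp only [Function.iterate_zero, id_eq]
    congr 1
    exact Fin.ext (by simp [Nat.mod_eq_of_lt i.isLt])
  | succ t ih =>
    rw [Function.iterate_succ_apply']
    show (rot1^[t] x) ⟨(i.val + 1) % n, _⟩ = _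
    rw [ih]
    congr 1
    apply Fin.ext
    show ((i.val + 1) % n + t) % n = (i.val + (t + 1)) % n
    rw [Nat.mod_add_mod]
    exact congrArg (· % n) (by omega)

lemma rot1_pow_n {n k : ℕ} (x : Str n k) : rot1^[n] x = x := by
  funext i
  rw [rot1_pow_apply]
  congr 1
  exact Fin.ext (by simp [Nat.add_mod_right, Nat.mod_eq_of_lt i.isLt])

lemma rot1_pow_mul_n {n k : ℕ} (j : ℕ) (x : Str n k) : rot1^[j * n] x = x := by
  induction j with
  | zero => simp
  | succ j ih =>
    have : (j + 1) * n = n + j * n := by ring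
    rw [this, Function.iterate_add_apply, ih, rot1_pow_n]

-- ===================== basic computations =====================

lemma shift_apply_zero {n k : ℕ} (hn : 0 < n) (c : Fin k) (β : Str n k) :
    shift c β ⟨0, hn⟩ = c := by simp [shift]

lemma rot1_shift {n k : ℕ} (hn : 0 < n) (c : Fin k) (β : Str n k) :
    rot1 (shift c β) = upd hn β c := by
  funext i
  show shift c β ⟨(i.val + 1) % n, _⟩ = _
  rcases eq_or_ne i.val (n - 1) with h | h
  · have h1 : (i.val + 1) % n = 0 := by
      have : i.val + 1 = n := by omega
      simp [this]
    have h2 : i = lastIdx hn := Fin.ext h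
    subst h2
    rw [upd, Function.update_self]
    have h1' : ((lastIdx hn : Fin n).val + 1) % n = 0 := h1
    simp [shift, h1']
  · have hlt : i.val + 1 < n := by have := i.isLt; omega
    have h1 : (i.val + 1) % n = i.val + 1 := Nat.mod_eq_of_lt hlt
    have h2 : i ≠ lastIdx hn := fun hh => h (by rw [hh]; rfl)
    rw [upd, Function.update_of_ne h2]
    show (if ((i.val + 1) % n) = 0 then c else β ⟨(i.val + 1) % n - 1, _⟩) = β i
    rw [if_neg (by omega)]
    congr 1
    exact Fin.ext (by simp [h1])

lemma shift_upd {n k : ℕ} (hn : 0 < n) (c x : Fin k) (β : Str n k) :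
    shift c (upd hn β x) = shift c β := by
  funext i
  rcases eq_or_ne i.val 0 with h | h
  · simp [shift, h]
  · have hi : 0 < i.val := Nat.pos_of_ne_zero h
    have : (⟨i.val - 1, lt_of_le_of_lt (Nat.sub_le _ _) i.isLt⟩ : Fin n) ≠ lastIdx hn := by
      intro hh
      have := congrArg Fin.val hh
      simp only [lastIdx] at this
      have := i.isLt
      omega
    simp only [shift, if_neg h]
    rw [upd, Function.update_of_ne this]

lemma lastSym_upd {n k : ℕ} (hn : 0 < n) (β : Str n k) (c : Fin k) :
    lastSym hn (upd hn β c) = c := by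
  rw [lastSym_eq, upd, Function.update_self]

lemma upd_self {n k : ℕ} (hn : 0 < n) (β : Str n k) :
    upd hn β (lastSym hn β) = β := by
  funext i
  rcases eq_or_ne i (lastIdx hn) with h | h
  · rw [h, upd, Function.update_self]; rfl
  · rw [upd, Function.update_of_ne h]

-- ===================== IsRotation lemmas =====================

lemma isRotation_iff_pow {n k : ℕ} {x y : Str n k} :
    IsRotation x y ↔ ∃ j : ℕ, y = rot1^[j] x := by
  constructor
  · rintro ⟨j, hj⟩
    exact ⟨j, funext fun i => (hj i).trans (rot1_pow_apply j x i).symm⟩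
  · rintro ⟨j, rfl⟩
    exact ⟨j, fun i => rot1_pow_apply j x i⟩

lemma isRotation_refl {n k : ℕ} (x : Str n k) : IsRotation x x :=
  isRotation_iff_pow.2 ⟨0, rfl⟩

lemma isRotation_rot1_pow {n k : ℕ} (j : ℕ) (x : Str n k) : IsRotation x (rot1^[j] x) :=
  isRotation_iff_pow.2 ⟨j, rfl⟩

lemma isRotation_trans {n k : ℕ} {x y z : Str n k} :
    IsRotation x y → IsRotation y z → IsRotation x z := by
  rw [isRotation_iff_pow, isRotation_iff_pow, isRotation_iff_pow]
  rintro ⟨a, rfl⟩ ⟨b, rfl⟩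
  exact ⟨b + a, (Function.iterate_add_apply _ _ _ _).symm⟩

lemma isRotation_symm {n k : ℕ} {x y : Str n k} (h : IsRotation x y) : IsRotation y x := by
  rw [isRotation_iff_pow] at h ⊢
  obtain ⟨j, rfl⟩ := h
  refine ⟨j * (n - 1), ?_⟩
  rw [← Function.iterate_add_apply]
  rcases Nat.eq_zero_or_pos n with hn | hn
  · funext i; exact absurd i.isLt (by omega)
  · have : j * (n - 1) + j = j * n := by
      have h1 : n - 1 + 1 = n := by omega
      calc j * (n - 1) + j = j * ((n - 1) + 1) := by rw [Nat.mul_succ]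
        _ = j * n := by rw [h1]
    rw [this, rot1_pow_mul_n]

-- ===================== rotation index bijection =====================

lemma rotIdx_inj {n : ℕ} : Function.Injective
    (fun i : Fin n => (⟨(i.val + 1) % n, Nat.mod_lt _ i.pos⟩ : Fin n)) := by
  intro a b hab
  have h := congrArg Fin.val hab
  simp only at h
  apply Fin.ext
  have ha := a.isLt; have hb := b.isLt
  rcases eq_or_ne (a.val + 1) n with h1 | h1
  · rcases eq_or_ne (b.val + 1) n with h2 | h2
    · omega
    · rw [h1, Nat.mod_self, Nat.mod_eq_of_lt (by omega)] at h; omega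
  · rcases eq_or_ne (b.val + 1) n with h2 | h2
    · rw [h2, Nat.mod_self, Nat.mod_eq_of_lt (by omega)] at h; omega
    · rw [Nat.mod_eq_of_lt (by omega), Nat.mod_eq_of_lt (by omega)] at h; omega

-- ===================== OneUp / IncrTo lemmas =====================

lemma oneUp_le {n k : ℕ} {x y : Str n k} (h : OneUp x y) : ∀ i, x i ≤ y i := by
  obtain ⟨i0, hlt, heq⟩ := h
  intro j
  rcases eq_or_ne j i0 with rfl | hne
  · exact hlt.le
  · exact (heq j hne).le

lemma chain_le {n k : ℕ} {S : Set (Str n k)} {x y : Str n k}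
    (h : Relation.ReflTransGen (fun a b => OneUp a b ∧ b ∈ S) x y) : ∀ i, x i ≤ y i := by
  induction h with
  | refl => exact fun i => le_refl _
  | tail _ hbc ih => exact fun i => (ih i).trans (oneUp_le hbc.1 i)

lemma oneUp_rot1 {n k : ℕ} {x y : Str n k} (h : OneUp x y) : OneUp (rot1 x) (rot1 y) := by
  obtain ⟨i0, hlt, heq⟩ := h
  have hn : 0 < n := i0.pos
  refine ⟨⟨(i0.val + (n - 1)) % n, Nat.mod_lt _ hn⟩, ?_, ?_⟩
  · show x ⟨((i0.val + (n - 1)) % n + 1) % n, _⟩ < y ⟨((i0.val + (n - 1)) % n + 1) % n, _⟩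
    have hv : ((i0.val + (n - 1)) % n + 1) % n = i0.val := by
      rw [Nat.mod_add_mod]
      have : i0.val + (n - 1) + 1 = i0.val + n := by omega
      rw [this, Nat.add_mod_right, Nat.mod_eq_of_lt i0.isLt]
    have : (⟨((i0.val + (n - 1)) % n + 1) % n, Nat.mod_lt _ hn⟩ : Fin n) = i0 := Fin.ext hv
    rw [this]; exact hlt
  · intro j hj
    show x ⟨(j.val + 1) % n, _⟩ = y ⟨(j.val + 1) % n, _⟩
    apply heq
    intro hcon
    apply hj
    apply rotIdx_inj
    show (⟨(j.val + 1) % n, _⟩ : Fin n) = ⟨((i0.val + (n-1)) % n + 1) % n, _⟩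
    rw [hcon]
    apply Fin.ext
    show i0.val = ((i0.val + (n - 1)) % n + 1) % n
    rw [Nat.mod_add_mod]
    have : i0.val + (n - 1) + 1 = i0.val + n := by omega
    rw [this, Nat.add_mod_right, Nat.mod_eq_of_lt i0.isLt]

lemma chain_rot1 {n k : ℕ} {S : Set (Str n k)} (hS : ClosedUnderRot S) {x y : Str n k}
    (h : Relation.ReflTransGen (fun a b => OneUp a b ∧ b ∈ S) x y) :
    Relation.ReflTransGen (fun a b => OneUp a b ∧ b ∈ S) (rot1 x) (rot1 y) := by
  induction h with
  | refl => exact Relation.ReflTransGen.refl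
  | tail _ hbc ih =>
    exact Relation.ReflTransGen.tail ih
      ⟨oneUp_rot1 hbc.1, hS _ hbc.2 _ (isRotation_iff_pow.2 ⟨1, rfl⟩)⟩

lemma incrTo_rot1 {n k : ℕ} {S : Set (Str n k)} (hS : ClosedUnderRot S) {x y : Str n k}
    (h : IncrTo S x y) : IncrTo S (rot1 x) (rot1 y) :=
  ⟨hS _ h.1 _ (isRotation_iff_pow.2 ⟨1, rfl⟩), chain_rot1 hS h.2⟩

lemma incrTo_upd {n k : ℕ} (hn : 0 < n) {S : Set (Str n k)} {β : Str n k} {c : Fin k}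
    (hc : lastSym hn β ≤ c) (hβ : β ∈ S) (hu : upd hn β c ∈ S) :
    IncrTo S β (upd hn β c) := by
  rcases eq_or_lt_of_le hc with h | h
  · refine ⟨hβ, ?_⟩
    rw [← h, upd_self]
  · refine ⟨hβ, Relation.ReflTransGen.single ⟨⟨lastIdx hn, ?_, ?_⟩, hu⟩⟩
    · rw [upd, Function.update_self]; exact h
    · intro j hj; rw [upd, Function.update_of_ne hj]

-- ===================== potential Φ =====================

def phi {n k : ℕ} (β : Str n k) : ℕ := ∑ i, (β i : ℕ)

lemma phi_rot1 {n k : ℕ} (β : Str n k) : phi (rot1 β) = phi β := by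
  unfold phi
  apply Fintype.sum_bijective
    (fun i : Fin n => (⟨(i.val + 1) % n, Nat.mod_lt _ i.pos⟩ : Fin n))
    ((Finite.injective_iff_bijective).1 rotIdx_inj)
  intro i
  rfl

lemma phi_rot1_pow {n k : ℕ} (t : ℕ) (β : Str n k) : phi (rot1^[t] β) = phi β := by
  induction t with
  | zero => rfl
  | succ t ih => rw [Function.iterate_succ_apply', phi_rot1, ih]

lemma phi_isRotation {n k : ℕ} {x y : Str n k} (h : IsRotation x y) : phi y = phi x := by
  obtain ⟨j, rfl⟩ := isRotation_iff_pow.1 h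
  exact phi_rot1_pow j x

lemma phi_upd {n k : ℕ} (hn : 0 < n) (β : Str n k) (c : Fin k) :
    phi (upd hn β c) + (lastSym hn β : ℕ) = phi β + (c : ℕ) := by
  classical
  unfold phi upd
  have hcomp : (fun i => ((Function.update β (lastIdx hn) c i : Fin k) : ℕ)) =
      Function.update (fun i => ((β i : Fin k) : ℕ)) (lastIdx hn) ((c : Fin k) : ℕ) := by
    funext i
    rcases eq_or_ne i (lastIdx hn) with rfl | h
    · simp
    · rw [Function.update_of_ne h, Function.update_of_ne h]
  calc ∑ i, ((Function.update β (lastIdx hn) c i : Fin k) : ℕ) + (lastSym hn β : ℕ)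
      = ∑ i, Function.update (fun i => ((β i : Fin k) : ℕ)) (lastIdx hn) ((c:Fin k):ℕ) i
        + (lastSym hn β : ℕ) := by rw [hcomp]
    _ = _ := ?_
  rw [Finset.sum_update_of_mem (Finset.mem_univ _)]
  rw [lastSym_eq]
  have h2 : ∑ i, (β i : ℕ) =
      (β (lastIdx hn) : ℕ) + ∑ i ∈ Finset.univ.erase (lastIdx hn), (β i : ℕ) :=
    (Finset.add_sum_erase _ _ (Finset.mem_univ _)).symm
  rw [Finset.erase_eq] at h2
  omega

lemma phi_shift {n k : ℕ} (hn : 0 < n) (β : Str n k) (c : Fin k) :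
    phi (shift c β) + (lastSym hn β : ℕ) = phi β + (c : ℕ) := by
  have h1 : phi (shift c β) = phi (rot1 (shift c β)) := (phi_rot1 _).symm
  rw [h1, rot1_shift hn, phi_upd hn]

lemma phi_shift_lt {n k : ℕ} (hn : 0 < n) {β : Str n k} {c : Fin k}
    (h : c < lastSym hn β) : phi (shift c β) < phi β := by
  have := phi_shift hn β c
  have hc : (c : ℕ) < (lastSym hn β : ℕ) := h
  omega

lemma phi_lt_of_le_ne {n k : ℕ} {x y : Str n k} (hle : ∀ i, x i ≤ y i) (hne : x ≠ y) :
    phi x < phi y := by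
  have hex : ∃ i, x i < y i := by
    by_contra hcon
    push_neg at hcon
    exact hne (funext fun i => le_antisymm (hle i) (hcon i))
  obtain ⟨i0, hi0⟩ := hex
  exact Finset.sum_lt_sum (fun i _ => Fin.le_iff_val_le_val.1 (hle i))
    ⟨i0, Finset.mem_univ _, hi0⟩


-- ===================== WinIn helpers =====================

lemma winIn_mono {n k : ℕ} {hn : 0 < n} {S : Set (Str n k)} {tgt β : Str n k} {m : ℕ}
    (h : WinIn hn S tgt β m) : ∀ m', m ≤ m' → WinIn hn S tgt β m' := by
  induction h with
  | passWin β m c hc hcS heq hW ih =>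
    intro m' hm'
    obtain ⟨m'', rfl⟩ : ∃ m'', m' = m'' + 1 := ⟨m' - 1, by omega⟩
    exact WinIn.passWin β m'' c hc hcS heq
      (fun c' h1 h2 h3 => ih c' h1 h2 h3 m'' (by omega))
  | passStep β m c hc hcS hwin hW ihwin ih =>
    intro m' hm'
    obtain ⟨m'', rfl⟩ : ∃ m'', m' = m'' + 1 := ⟨m' - 1, by omega⟩
    exact WinIn.passStep β m'' c hc hcS (ihwin m'' (by omega))
      (fun c' h1 h2 h3 => ih c' h1 h2 h3 m'' (by omega))

lemma winsPassWin {n k : ℕ} {hn : 0 < n} {S : Set (Str n k)} {tgt β : Str n k} (c : Fin k)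
    (hc : lastSym hn β ≤ c) (hcS : shift c β ∈ S) (heq : shift c β = tgt)
    (hW : ∀ c' : Fin k, c' < lastSym hn β → shift c' β ∈ S → shift c' β ≠ tgt →
      ∃ m, WinIn hn S tgt (shift c' β) m) :
    ∃ m, WinIn hn S tgt β m := by
  classical
  choose! f hf using hW
  refine ⟨Finset.univ.sup f + 1, WinIn.passWin β _ c hc hcS heq ?_⟩
  intro c' h1 h2 h3
  exact winIn_mono (hf c' h1 h2 h3) _ (Finset.le_sup (Finset.mem_univ c'))

lemma winsPassStep {n k : ℕ} {hn : 0 < n} {S : Set (Str n k)} {tgt β : Str n k} (c : Fin k)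
    (hc : lastSym hn β ≤ c) (hcS : shift c β ∈ S)
    (hwin : ∃ m, WinIn hn S tgt (shift c β) m)
    (hW : ∀ c' : Fin k, c' < lastSym hn β → shift c' β ∈ S → shift c' β ≠ tgt →
      ∃ m, WinIn hn S tgt (shift c' β) m) :
    ∃ m, WinIn hn S tgt β m := by
  classical
  choose! f hf using hW
  obtain ⟨m0, hm0⟩ := hwin
  refine ⟨max m0 (Finset.univ.sup f) + 1, WinIn.passStep β _ c hc hcS ?_ ?_⟩
  · exact winIn_mono hm0 _ (le_max_left _ _)
  · intro c' h1 h2 h3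
    exact winIn_mono (hf c' h1 h2 h3) _
      ((Finset.le_sup (Finset.mem_univ c')).trans (le_max_right _ _))

/-- Transfer a win in the game on a subset `A ⊆ S` to the game on `S`, provided all
warden moves from `A`-positions that stay in `S` actually stay in `A`. -/
lemma winIn_of_subset {n k : ℕ} {hn : 0 < n} {A S : Set (Str n k)} {tgt : Str n k}
    (hsub : A ⊆ S)
    (hclose : ∀ u ∈ A, ∀ c' : Fin k, c' < lastSym hn u → shift c' u ∈ S → shift c' u ∈ A) :
    ∀ {u m}, WinIn hn A tgt u m → u ∈ A → WinIn hn S tgt u m := by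
  intro u m h
  induction h with
  | passWin β m c hc hcS heq hW ih =>
    intro hβ
    exact WinIn.passWin β m c hc (hsub hcS) heq
      (fun c' h1 h2 h3 => ih c' h1 (hclose β hβ c' h1 h2) h3 (hclose β hβ c' h1 h2))
  | passStep β m c hc hcS hwin hW ihwin ih =>
    intro hβ
    exact WinIn.passStep β m c hc (hsub hcS) (ihwin hcS)
      (fun c' h1 h2 h3 => ih c' h1 (hclose β hβ c' h1 h2) h3 (hclose β hβ c' h1 h2))

-- ===================== minimal elements =====================

def MinA {n k : ℕ} (A : Set (Str n k)) (z : Str n k) : Prop :=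
  ∀ y ∈ A, (∀ i, y i ≤ z i) → y = z

lemma le_rot1_pow {n k : ℕ} {x y : Str n k} (h : ∀ i, x i ≤ y i) (t : ℕ) :
    ∀ i, (rot1^[t] x) i ≤ (rot1^[t] y) i := by
  intro i
  rw [rot1_pow_apply, rot1_pow_apply]
  exact h _

lemma minA_rot {n k : ℕ} {A : Set (Str n k)} (hA : ClosedUnderRot A) {ν ρ : Str n k}
    (hmin : MinA A ν) (hρ : IsRotation ν ρ) : MinA A ρ := by
  obtain ⟨j, rfl⟩ := isRotation_iff_pow.1 hρ
  intro y hy hle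
  rcases Nat.eq_zero_or_pos n with hn | hn
  · funext i; exact absurd i.isLt (by omega)
  have hmul : j * (n - 1) + j = j * n := by
    have h1 : n - 1 + 1 = n := by omega
    calc j * (n - 1) + j = j * ((n - 1) + 1) := by rw [Nat.mul_succ]
      _ = j * n := by rw [h1]
  have hy' : rot1^[j * (n - 1)] y ∈ A := hA _ hy _ (isRotation_rot1_pow _ _)
  have hle' : ∀ i, (rot1^[j * (n - 1)] y) i ≤ ν i := by
    have := le_rot1_pow hle (j * (n - 1))
    intro i
    have h2 : rot1^[j * (n - 1)] (rot1^[j] ν) = ν := by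
      rw [← Function.iterate_add_apply, hmul, rot1_pow_mul_n]
    rw [← h2]
    exact this i
  have heq := hmin _ hy' hle'
  have : rot1^[j] (rot1^[j * (n - 1)] y) = y := by
    rw [← Function.iterate_add_apply]
    have : j + j * (n - 1) = j * n := by omega
    rw [this, rot1_pow_mul_n]
  rw [← this, heq]

lemma starve_of_min {n k : ℕ} (hn : 0 < n) {A : Set (Str n k)} (hA : ClosedUnderRot A)
    {ρ : Str n k} (hmin : MinA A ρ) :
    ∀ c' : Fin k, c' < lastSym hn ρ → shift c' ρ ∉ A := by
  intro c' hc' hmem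
  have hw : upd hn ρ c' ∈ A := by
    have : rot1 (shift c' ρ) = upd hn ρ c' := rot1_shift hn c' ρ
    rw [← this]
    exact hA _ hmem _ (isRotation_iff_pow.2 ⟨1, rfl⟩)
  have hle : ∀ i, (upd hn ρ c') i ≤ ρ i := by
    intro i
    rcases eq_or_ne i (lastIdx hn) with rfl | h
    · rw [upd, Function.update_self]; exact hc'.le
    · rw [upd, Function.update_of_ne h]
  have := hmin _ hw hle
  have h2 := congrArg (fun f => f (lastIdx hn)) this
  simp only [upd, Function.update_self] at h2
  rw [h2] at hc'
  exact lt_irrefl _ hc'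

lemma exists_minA {n k : ℕ} {A : Set (Str n k)} :
    ∀ N, ∀ x₀ ∈ A, phi x₀ ≤ N → ∃ ν ∈ A, (∀ i, ν i ≤ x₀ i) ∧ MinA A ν := by
  intro N
  induction N with
  | zero =>
    intro x₀ hx₀ hphi
    refine ⟨x₀, hx₀, fun i => le_refl _, ?_⟩
    intro y hy hle
    by_contra hne
    have := phi_lt_of_le_ne hle hne
    omega
  | succ N ih =>
    intro x₀ hx₀ hphi
    by_cases hm : MinA A x₀
    · exact ⟨x₀, hx₀, fun i => le_refl _, hm⟩
    · simp only [MinA, not_forall] at hm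
      obtain ⟨y, hy, hle, hne⟩ := hm
      have hlt := phi_lt_of_le_ne hle hne
      obtain ⟨ν, hνA, hνle, hνmin⟩ := ih y hy (by omega)
      exact ⟨ν, hνA, fun i => (hνle i).trans (hle i), hνmin⟩

/-- Rotations of the goal are maximal in `A`. -/
lemma no_above_rot {n k : ℕ} {A : Set (Str n k)} {α : Str n k}
    (hinc : ∀ x ∈ A, ∃ γ, IsRotation α γ ∧ IncrTo A x γ)
    {y z : Str n k} (hy : y ∈ A) (hz : IsRotation α z)
    (hzy : ∀ i, z i ≤ y i) (hne : z ≠ y) : False := by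
  obtain ⟨γ₂, hγ₂rot, hγ₂⟩ := hinc y hy
  have h1 : phi z < phi y := phi_lt_of_le_ne hzy hne
  have h2 : ∀ i, y i ≤ γ₂ i := chain_le hγ₂.2
  have h3 : phi y ≤ phi γ₂ := Finset.sum_le_sum (fun i _ => Fin.le_iff_val_le_val.1 (h2 i))
  have h4 : phi γ₂ = phi α := phi_isRotation hγ₂rot
  have h5 : phi z = phi α := phi_isRotation hz
  omega

-- ===================== replay machinery =====================

/-- Replaying the last symbol undoes one left rotation. -/
lemma replay_step {n k : ℕ} (hn : 0 < n) (m : ℕ) (x : Str n k) :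
    shift (lastSym hn (rot1^[m + 1] x)) (rot1^[m + 1] x) = rot1^[m] x := by
  funext i
  rcases eq_or_ne i.val 0 with h0 | h0
  · have hL : lastSym hn (rot1^[m + 1] x) = x ⟨m % n, Nat.mod_lt _ hn⟩ := by
      rw [lastSym_eq, lastIdx, rot1_pow_apply]
      congr 1
      apply Fin.ext
      show (n - 1 + (m + 1)) % n = m % n
      have : n - 1 + (m + 1) = m + n := by omega
      rw [this, Nat.add_mod_right]
    have hR : (rot1^[m] x) i = x ⟨m % n, Nat.mod_lt _ hn⟩ := by
      rw [rot1_pow_apply]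
      congr 1
      apply Fin.ext
      show (i.val + m) % n = m % n
      rw [h0, Nat.zero_add]
    simp only [shift, if_pos h0]
    rw [hL, hR]
  · have hi : 0 < i.val := Nat.pos_of_ne_zero h0
    simp only [shift, if_neg h0]
    rw [rot1_pow_apply, rot1_pow_apply]
    congr 1
    apply Fin.ext
    show (i.val - 1 + (m + 1)) % n = (i.val + m) % n
    congr 1
    omega

/-- If the whole forward rotation orbit of `x` is warden-starved and a position
on it is winning, then all the positions further along are winning too. -/
lemma replay_lemma {n k : ℕ} (hn : 0 < n) {A : Set (Str n k)} {tgt x : Str n k}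
    (hmem : ∀ j, rot1^[j] x ∈ A)
    (hstv : ∀ j, ∀ c' : Fin k, c' < lastSym hn (rot1^[j] x) → shift c' (rot1^[j] x) ∉ A)
    {b : ℕ} (hb : ∃ m, WinIn hn A tgt (rot1^[b] x) m) :
    ∀ a, ∃ m, WinIn hn A tgt (rot1^[b + a] x) m := by
  intro a
  induction a with
  | zero => exact hb
  | succ a ih =>
    have hba : b + (a + 1) = b + a + 1 := by omega
    rw [hba]
    have hstep : shift (lastSym hn (rot1^[b + a + 1] x)) (rot1^[b + a + 1] x)
        = rot1^[b + a] x := replay_step hn (b + a) x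
    refine winsPassStep (lastSym hn (rot1^[b + a + 1] x)) (le_refl _) ?_ ?_ ?_
    · rw [hstep]; exact hmem _
    · rw [hstep]
      exact ih
    · intro c' h1 h2 h3
      exact absurd h2 (hstv (b + a + 1) c' h1)

-- ===================== the escape from a starved orbit =====================

/-- If the warden knocks the position into a fully starved rotation orbit, the
prisoner can replay his originally intended response after a full loop of
replays, during which the warden cannot move at all. -/
lemma escape_lemma {n k : ℕ} (hn : 0 < n) {A : Set (Str n k)} {ν tgt : Str n k}
    (hA : ClosedUnderRot A)
    (hstarveOrb : ∀ ρ, IsRotation ν ρ → ρ ∈ A →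
      ∀ c'' : Fin k, c'' < lastSym hn ρ → shift c'' ρ ∉ A)
    {u : Str n k} {c c' : Fin k}
    (hc : lastSym hn u ≤ c) (h1 : c' < lastSym hn u)
    (hσA : shift c' u ∈ A) (hσOrb : IsRotation ν (shift c' u))
    (hcuA : shift c u ∈ A)
    (exit : shift c u = tgt ∨ ∃ m, WinIn hn A tgt (shift c u) m) :
    ∃ m, WinIn hn A tgt (shift c' u) m := by
  set σ' := shift c' u with hσ'
  have hmem : ∀ j, rot1^[j] σ' ∈ A := fun j => hA _ hσA _ (isRotation_rot1_pow _ _)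
  have hOrbj : ∀ j, IsRotation ν (rot1^[j] σ') :=
    fun j => isRotation_trans hσOrb (isRotation_rot1_pow _ _)
  have hstv : ∀ j, ∀ c'' : Fin k, c'' < lastSym hn (rot1^[j] σ') →
      shift c'' (rot1^[j] σ') ∉ A := fun j => hstarveOrb _ (hOrbj j) (hmem j)
  have h1pos : rot1^[1] σ' = upd hn u c' := by
    rw [Function.iterate_one]; exact rot1_shift hn c' u
  have hlastupd : lastSym hn (upd hn u c') = c' := lastSym_upd hn u c'
  have hshiftupd : shift c (upd hn u c') = shift c u := shift_upd hn c c' u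
  have hc'c : c' ≤ c := (h1.trans_le hc).le
  have W1 : ∃ m, WinIn hn A tgt (rot1^[1] σ') m := by
    rw [h1pos]
    have hstv1 : ∀ c'' : Fin k, c'' < lastSym hn (upd hn u c') →
        shift c'' (upd hn u c') ∉ A := by
      rw [← h1pos]; exact hstv 1
    rcases exit with heq | hwin
    · refine winsPassWin c ?_ ?_ ?_ ?_
      · rw [hlastupd]; exact hc'c
      · rw [hshiftupd, heq]; exact heq ▸ hcuA
      · rw [hshiftupd]; exact heq
      · intro c'' hlt hmem' _
        exact absurd hmem' (hstv1 c'' hlt)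
    · refine winsPassStep c ?_ ?_ ?_ ?_
      · rw [hlastupd]; exact hc'c
      · rw [hshiftupd]; exact hcuA
      · rw [hshiftupd]; exact hwin
      · intro c'' hlt hmem' _
        exact absurd hmem' (hstv1 c'' hlt)
  have hall := replay_lemma hn hmem hstv (b := 1) W1 (n - 1)
  have hfin : rot1^[1 + (n - 1)] σ' = σ' := by
    have : 1 + (n - 1) = n := by omega
    rw [this, rot1_pow_n]
  rw [hfin] at hall
  exact hall

-- ===================== the lift lemma =====================

/-- Winning the game restricted to `A` minus a starved minimal orbit lifts to
winning the game on `A`. -/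
lemma lift_lemma {n k : ℕ} (hn : 0 < n) {A : Set (Str n k)} {ν tgt : Str n k}
    (hA : ClosedUnderRot A)
    (hstarveOrb : ∀ ρ, IsRotation ν ρ → ρ ∈ A →
      ∀ c'' : Fin k, c'' < lastSym hn ρ → shift c'' ρ ∉ A)
    (htgtA : tgt ∈ A) :
    ∀ {u m}, WinIn hn (A \ {y | IsRotation ν y}) tgt u m → ∃ m', WinIn hn A tgt u m' := by
  intro u m h
  induction h with
  | passWin β m c hc hcS heq hW ih =>
    refine winsPassWin c hc hcS.1 heq ?_
    intro c' h1 h2 h3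
    by_cases hA' : shift c' β ∈ A \ {y | IsRotation ν y}
    · exact ih c' h1 hA' h3
    · have hOrb : IsRotation ν (shift c' β) := by
        by_contra hcon
        exact hA' ⟨h2, hcon⟩
      exact escape_lemma hn hA hstarveOrb hc h1 h2 hOrb (heq ▸ htgtA) (Or.inl heq)
  | passStep β m c hc hcS hwin hW ihwin ih =>
    refine winsPassStep c hc hcS.1 ihwin ?_
    intro c' h1 h2 h3
    by_cases hA' : shift c' β ∈ A \ {y | IsRotation ν y}
    · exact ih c' h1 hA' h3
    · have hOrb : IsRotation ν (shift c' β) := by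
        by_contra hcon
        exact hA' ⟨h2, hcon⟩
      exact escape_lemma hn hA hstarveOrb hc h1 h2 hOrb hcS.1 (Or.inr ihwin)

lemma mod_eq_last {n i p : ℕ} (hi : i < n) (hp : p < n) (h : (i + (p + 1)) % n = p) :
    i = n - 1 := by
  rcases Nat.lt_or_ge (i + (p + 1)) n with hlt | hge
  · rw [Nat.mod_eq_of_lt hlt] at h; omega
  · have h2 : (i + (p + 1)) % n = (i + (p + 1) - n) % n := Nat.mod_eq_sub_mod hge
    rw [h2, Nat.mod_eq_of_lt (by omega)] at h
    omega

-- ===================== the main induction =====================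

lemma wins_all {n k : ℕ} (hn : 0 < n) (α : Str n k) :
    ∀ N (A : Set (Str n k)), A.ncard ≤ N → ClosedUnderRot A → α ∈ A →
      (∀ x ∈ A, ∃ γ, IsRotation α γ ∧ IncrTo A x γ) →
      ∀ β ∈ A, ∃ m, WinIn hn A α β m := by
  intro N
  induction N with
  | zero =>
    intro A hcard _ hαA _ β _
    have : A = ∅ := (Set.ncard_eq_zero (Set.toFinite A)).1 (by omega)
    rw [this] at hαA
    exact absurd hαA (Set.notMem_empty α)
  | succ N ih =>
    intro A hcard hArot hαA hinc β hβ
    by_cases hbase : ∀ x ∈ A, IsRotation α x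
    · -- base case : A consists of rotations of the goal only
      have hstarveAll : ∀ u ∈ A, ∀ c' : Fin k, c' < lastSym hn u → shift c' u ∉ A := by
        intro u hu c' hc' hmem
        have h1 : phi (shift c' u) = phi α := phi_isRotation (hbase _ hmem)
        have h2 : phi u = phi α := phi_isRotation (hbase _ hu)
        have h3 := phi_shift_lt hn hc'
        omega
      set α0 := α ⟨0, hn⟩ with hα0
      have hsh : shift α0 (rot1 α) = α := by
        funext i
        rcases eq_or_ne i.val 0 with h | h
        · simp only [shift, if_pos h]
          rw [hα0]
          congr 1
          exact (Fin.ext h).symm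
        · simp only [shift, if_neg h]
          show α ⟨(i.val - 1 + 1) % n, _⟩ = α i
          congr 1
          apply Fin.ext
          show (i.val - 1 + 1) % n = i.val
          have hi : 0 < i.val := Nat.pos_of_ne_zero h
          have : i.val - 1 + 1 = i.val := by omega
          rw [this, Nat.mod_eq_of_lt i.isLt]
      have hlast : lastSym hn (rot1 α) = α0 := by
        rw [lastSym_eq]
        show α ⟨((n - 1) + 1) % n, _⟩ = α0
        rw [hα0]
        congr 1
        apply Fin.ext
        show ((n - 1) + 1) % n = 0
        have : n - 1 + 1 = n := by omega
        rw [this, Nat.mod_self]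
      have hrotmem : ∀ j, rot1^[j] α ∈ A := fun j => hArot _ hαA _ (isRotation_rot1_pow _ _)
      have W1 : ∃ m, WinIn hn A α (rot1^[1] α) m := by
        rw [Function.iterate_one]
        refine winsPassWin α0 (by rw [hlast]) (by rw [hsh]; exact hαA) hsh ?_
        intro c' h1 h2 h3
        exact absurd h2 (hstarveAll _ (hrotmem 1) c' (by rw [Function.iterate_one]; exact h1))
      obtain ⟨j, hj⟩ := isRotation_iff_pow.1 (hbase β hβ)
      have hall := replay_lemma hn hrotmem
        (fun j c' h1 => hstarveAll _ (hrotmem j) c' h1) (b := 1) W1 (j + n - 1)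
      have hexp : 1 + (j + n - 1) = j + n := by omega
      rw [hexp] at hall
      rw [Function.iterate_add_apply, rot1_pow_n, ← hj] at hall
      exact hall
    · -- inductive step : peel a starved minimal orbit not containing the goal
      push_neg at hbase
      obtain ⟨x₀, hx₀A, hx₀⟩ := hbase
      obtain ⟨ν, hνA, hνle, hνmin⟩ := exists_minA (phi x₀) x₀ hx₀A (le_refl _)
      have hνnotrot : ¬ IsRotation α ν := by
        intro h
        rcases eq_or_ne ν x₀ with rfl | hne
        · exact hx₀ h
        · exact no_above_rot hinc hx₀A h hνle hne
      have hA'sub : (A \ {y | IsRotation ν y}) ⊆ A := Set.diff_subset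
      have hcard' : (A \ {y | IsRotation ν y}).ncard ≤ N := by
        have hss : (A \ {y | IsRotation ν y}) ⊂ A := by
          refine ⟨Set.diff_subset, fun hsub => ?_⟩
          exact (hsub hνA).2 (isRotation_refl ν)
        have := Set.ncard_lt_ncard hss (Set.toFinite A)
        omega
      have hA'rot : ClosedUnderRot (A \ {y | IsRotation ν y}) := by
        intro y hy z hz
        refine ⟨hArot _ hy.1 _ hz, ?_⟩
        intro hzOrb
        exact hy.2 (isRotation_trans hzOrb (isRotation_symm hz))
      have hαA' : α ∈ A \ {y | IsRotation ν y} :=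
        ⟨hαA, fun hαOrb => hνnotrot (isRotation_symm hαOrb)⟩
      have hminOrb : ∀ ρ, IsRotation ν ρ → ρ ∈ A →
          ∀ c'' : Fin k, c'' < lastSym hn ρ → shift c'' ρ ∉ A :=
        fun ρ hρ _ => starve_of_min hn hArot (minA_rot hArot hνmin hρ)
      have hchain' : ∀ (γ : Str n k), ∀ x,
          Relation.ReflTransGen (fun a b => OneUp a b ∧ b ∈ A) x γ →
          x ∈ (A \ {y | IsRotation ν y}) →
          Relation.ReflTransGen
            (fun a b => OneUp a b ∧ b ∈ (A \ {y | IsRotation ν y})) x γ := by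
        intro γ x h
        induction h using Relation.ReflTransGen.head_induction_on with
        | refl => exact fun _ => Relation.ReflTransGen.refl
        | head hab hbc ih =>
          rename_i a b
          intro haA'
          have hbA' : b ∈ (A \ {y | IsRotation ν y}) := by
            refine ⟨hab.2, ?_⟩
            intro hbOrb
            have hmb := minA_rot hArot hνmin hbOrb
            have hEq := hmb a haA'.1 (oneUp_le hab.1)
            obtain ⟨i0, hi0, _⟩ := hab.1
            rw [hEq] at hi0
            exact lt_irrefl _ hi0
          exact Relation.ReflTransGen.head ⟨hab.1, hbA'⟩ (ih hbA')
      have hinc' : ∀ x ∈ (A \ {y | IsRotation ν y}), ∃ γ, IsRotation α γ ∧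
          IncrTo (A \ {y | IsRotation ν y}) x γ := by
        intro x hx
        obtain ⟨γ, h1, h2⟩ := hinc x hx.1
        exact ⟨γ, h1, hx, hchain' γ x h2.2 hx⟩
      have IH := ih _ hcard' hA'rot hαA' hinc'
      by_cases hβ' : β ∈ (A \ {y | IsRotation ν y})
      · obtain ⟨m, hm⟩ := IH β hβ'
        exact lift_lemma hn hArot hminOrb hαA hm
      · have hβOrb : IsRotation ν β := by
          by_contra h
          exact hβ' ⟨hβ, h⟩
        obtain ⟨γβ, hγβrot, hβchain⟩ := hinc β hβ
        have hβne : β ≠ γβ := by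
          rintro rfl
          exact hνnotrot (isRotation_trans hγβrot (isRotation_symm hβOrb))
        rcases Relation.ReflTransGen.cases_head hβchain.2 with heqc | ⟨δ, hstep, hrest⟩
        · exact absurd heqc hβne
        obtain ⟨hOneUp, hδA⟩ := hstep
        have hδA' : δ ∈ (A \ {y | IsRotation ν y}) := by
          refine ⟨hδA, ?_⟩
          intro hδOrb
          have hmδ := minA_rot hArot hνmin hδOrb
          have hEq := hmδ β hβ (oneUp_le hOneUp)
          obtain ⟨i0, hi0, _⟩ := hOneUp
          rw [hEq] at hi0
          exact lt_irrefl _ hi0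
        obtain ⟨p, hlt0, heq0⟩ := hOneUp
        set y := rot1^[p.val + 1] β with hy
        have hyOrb : IsRotation ν y := isRotation_trans hβOrb (isRotation_rot1_pow _ _)
        have hymem : y ∈ A := hArot _ hβ _ (isRotation_rot1_pow _ _)
        have hlast_y : lastSym hn y = β p := by
          rw [lastSym_eq, hy, rot1_pow_apply]
          congr 1
          apply Fin.ext
          show ((n - 1) + (p.val + 1)) % n = p.val
          have h5 : (n - 1) + (p.val + 1) = p.val + n := by omega
          rw [h5, Nat.add_mod_right, Nat.mod_eq_of_lt p.isLt]
        have hupd_y : upd hn y (δ p) = rot1^[p.val + 1] δ := by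
          funext i
          rcases eq_or_ne i (lastIdx hn) with rfl | hne
          · rw [upd, Function.update_self, rot1_pow_apply]
            congr 1
            apply Fin.ext
            show p.val = ((n - 1) + (p.val + 1)) % n
            have h5 : (n - 1) + (p.val + 1) = p.val + n := by omega
            rw [h5, Nat.add_mod_right, Nat.mod_eq_of_lt p.isLt]
          · rw [upd, Function.update_of_ne hne, hy, rot1_pow_apply, rot1_pow_apply]
            apply heq0
            intro hcon
            apply hne
            apply Fin.ext
            show i.val = n - 1
            have hcv := congrArg Fin.val hcon
            exact mod_eq_last i.isLt p.isLt hcv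
        have hsvy : shift (δ p) y ∈ (A \ {y | IsRotation ν y}) := by
          have h1 : rot1^[1] (shift (δ p) y) = rot1^[p.val + 1] δ := by
            rw [Function.iterate_one, rot1_shift hn, hupd_y]
          have h2 : IsRotation (shift (δ p) y) (rot1^[p.val + 1] δ) := by
            rw [← h1]
            exact isRotation_rot1_pow 1 _
          have h3 : IsRotation δ (shift (δ p) y) :=
            isRotation_trans (isRotation_rot1_pow (p.val + 1) δ) (isRotation_symm h2)
          exact hA'rot _ hδA' _ h3
        have Wy : ∃ m, WinIn hn A α y m := by
          refine winsPassStep (δ p) (by rw [hlast_y]; exact hlt0.le) (hA'sub hsvy) ?_ ?_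
          · obtain ⟨m, hm⟩ := IH _ hsvy
            exact lift_lemma hn hArot hminOrb hαA hm
          · intro c' h1 h2 _
            exact absurd h2 (hminOrb y hyOrb hymem c' h1)
        have hrotβmem : ∀ j, rot1^[j] β ∈ A := fun j => hArot _ hβ _ (isRotation_rot1_pow _ _)
        have hrotβstv : ∀ j, ∀ c' : Fin k, c' < lastSym hn (rot1^[j] β) →
            shift c' (rot1^[j] β) ∉ A :=
          fun j => hminOrb _ (isRotation_trans hβOrb (isRotation_rot1_pow _ _)) (hrotβmem j)
        have hall := replay_lemma hn hrotβmem hrotβstv (b := p.val + 1)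
          (by rw [← hy]; exact Wy) ((p.val + 1) * (n - 1))
        have hexp : (p.val + 1) + (p.val + 1) * (n - 1) = (p.val + 1) * n := by
          have h1 : n - 1 + 1 = n := by omega
          calc (p.val + 1) + (p.val + 1) * (n - 1)
              = (p.val + 1) * (n - 1) + (p.val + 1) := by ring
            _ = (p.val + 1) * ((n - 1) + 1) := by rw [Nat.mul_succ]
            _ = (p.val + 1) * n := by rw [h1]
        rw [hexp, rot1_pow_mul_n] at hall
        exact hall

-- ===================== bridges between S and the increasable core =====================

lemma incrTo_rot1_pow {n k : ℕ} {S : Set (Str n k)} (hS : ClosedUnderRot S) (j : ℕ)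
    {x y : Str n k} (h : IncrTo S x y) : IncrTo S (rot1^[j] x) (rot1^[j] y) := by
  induction j with
  | zero => exact h
  | succ j ih =>
    rw [Function.iterate_succ_apply', Function.iterate_succ_apply']
    exact incrTo_rot1 hS ih

/-- The set of positions increasable (within `S`) to a rotation of the goal. -/
def core {n k : ℕ} (S : Set (Str n k)) (α : Str n k) : Set (Str n k) :=
  {x | x ∈ S ∧ ∃ γ, IsRotation α γ ∧ IncrTo S x γ}

lemma core_subset {n k : ℕ} (S : Set (Str n k)) (α : Str n k) : core S α ⊆ S :=
  fun _ h => h.1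

lemma core_mem_goal {n k : ℕ} {S : Set (Str n k)} {α : Str n k} (hα : α ∈ S) :
    α ∈ core S α :=
  ⟨hα, α, isRotation_refl α, hα, Relation.ReflTransGen.refl⟩

lemma core_rot {n k : ℕ} {S : Set (Str n k)} (hS : ClosedUnderRot S) (α : Str n k) :
    ClosedUnderRot (core S α) := by
  rintro x ⟨hxS, γ, hγrot, hγ⟩ z hz
  obtain ⟨j, rfl⟩ := isRotation_iff_pow.1 hz
  refine ⟨hS _ hxS _ (isRotation_rot1_pow j x), rot1^[j] γ, ?_, incrTo_rot1_pow hS j hγ⟩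
  exact isRotation_trans hγrot (isRotation_rot1_pow j γ)

lemma core_chain {n k : ℕ} {S : Set (Str n k)} {α : Str n k}
    {γ : Str n k} (hγrot : IsRotation α γ) :
    ∀ x, Relation.ReflTransGen (fun a b => OneUp a b ∧ b ∈ S) x γ →
      Relation.ReflTransGen (fun a b => OneUp a b ∧ b ∈ core S α) x γ := by
  intro x h
  induction h using Relation.ReflTransGen.head_induction_on with
  | refl => exact Relation.ReflTransGen.refl
  | head hab hbc ih =>
    rename_i a b
    have hbA : b ∈ core S α := ⟨hab.2, γ, hγrot, hab.2, hbc⟩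
    exact Relation.ReflTransGen.head ⟨hab.1, hbA⟩ ih

lemma core_inc {n k : ℕ} {S : Set (Str n k)} {α : Str n k} :
    ∀ x ∈ core S α, ∃ γ, IsRotation α γ ∧ IncrTo (core S α) x γ := by
  rintro x ⟨hxS, γ, hγrot, hγ⟩
  exact ⟨γ, hγrot, ⟨hxS, γ, hγrot, hγ⟩, core_chain hγrot x hγ.2⟩

lemma core_warden_closed {n k : ℕ} (hn : 0 < n) {S : Set (Str n k)}
    (hS : ClosedUnderRot S) (α : Str n k) :
    ∀ u ∈ core S α, ∀ c' : Fin k, c' < lastSym hn u → shift c' u ∈ S →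
      shift c' u ∈ core S α := by
  rintro u ⟨huS, γu, hγurot, hγu⟩ c' hc' hsh
  have hwS : upd hn u c' ∈ S := by
    rw [← rot1_shift hn]
    exact hS _ hsh _ (isRotation_rot1_pow 1 _)
  have hwA : upd hn u c' ∈ core S α := by
    refine ⟨hwS, γu, hγurot, hwS, Relation.ReflTransGen.head ⟨⟨lastIdx hn, ?_, ?_⟩, huS⟩ hγu.2⟩
    · rw [upd, Function.update_self]
      exact hc'
    · intro j hj
      rw [upd, Function.update_of_ne hj]
  have hrot : IsRotation (upd hn u c') (shift c' u) := by
    apply isRotation_symm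
    rw [← rot1_shift hn]
    exact isRotation_rot1_pow 1 _
  exact core_rot hS α _ hwA _ hrot

-- ===================== forward direction =====================

lemma forward_dir {n k : ℕ} (hn : 0 < n) {S : Set (Str n k)} (hS : ClosedUnderRot S)
    {α : Str n k} (hα : α ∈ S) :
    ∀ {β m}, WinIn hn S α β m → β ∈ S → ∃ γ, IsRotation α γ ∧ IncrTo S β γ := by
  intro β m h
  induction h with
  | passWin β m c hc hcS heq hW ih =>
    intro hβ
    refine ⟨rot1 α, isRotation_rot1_pow 1 α, ?_⟩
    have h1 : rot1 α = upd hn β c := by rw [← heq, rot1_shift hn]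
    rw [h1]
    refine incrTo_upd hn hc hβ ?_
    rw [← h1]
    exact hS α hα _ (isRotation_rot1_pow 1 α)
  | passStep β m c hc hcS hwin hW ihwin ih =>
    intro hβ
    obtain ⟨γ', hγ'rot, hγ'⟩ := ihwin hcS
    refine ⟨rot1 γ', isRotation_trans hγ'rot (isRotation_rot1_pow 1 γ'), ?_⟩
    have h2 : IncrTo S β (upd hn β c) := by
      refine incrTo_upd hn hc hβ ?_
      rw [← rot1_shift hn]
      exact hS _ hcS _ (isRotation_rot1_pow 1 _)
    have h3 : IncrTo S (rot1 (shift c β)) (rot1 γ') := incrTo_rot1 hS hγ'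
    rw [rot1_shift hn] at h3
    exact ⟨hβ, h2.2.trans h3.2⟩


/-- the prisoner can force a win from `β` iff `β` is increasable in `S`
to a rotation of the goal `α`. -/
theorem prisoner_wins_iff_incr {n k : ℕ} (hn : 0 < n) (S : Set (Str n k))
    (hS : ClosedUnderRot S) (α : Str n k) (hα : α ∈ S) (β : Str n k) (hβ : β ∈ S) :
    (∃ m : ℕ, WinIn hn S α β m) ↔ ∃ γ, IsRotation α γ ∧ IncrTo S β γ := by
  constructor
  · rintro ⟨m, hm⟩
    exact forward_dir hn hS hα hm hβ
  · rintro ⟨γ, hγrot, hγ⟩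
    have hβcore : β ∈ core S α := ⟨hβ, γ, hγrot, hγ⟩
    obtain ⟨m, hm⟩ := wins_all hn α (core S α).ncard (core S α) (le_refl _)
      (core_rot hS α) (core_mem_goal hα) core_inc β hβcore
    exact ⟨m, winIn_of_subset (core_subset S α) (core_warden_closed hn hS α) hm hβcore⟩

end UCG
end
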